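/- arXiv:1509.08007 — 2 statements merged into one kernel-verified Lean document; each statement's English description precedes it below -/
import Mathlib

section
/- Let A be a real symmetric m×m matrix and A⁺ its projection onto the PSD cone (obtained by replacing negative eigenvalues with zero in an orthogonal eigendecomposition). Then for every positive semidefinite matrix P, ‖A − P‖_F ≥ ‖A − A⁺‖_F; i.e., A⁺ is the Frobenius-norm-nearest PSD matrix to A. -/
open Matrix

noncomputable def frobNorm {m : ℕ} (M : Matrix (Fin m) (Fin m) ℝ) : ℝ :=
  Real.sqrt (∑ i, ∑ j, (M i j) ^ 2)

/-!
Conjugating by the orthogonal matrix `B` preserves the Frobenius norm, so everything can be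
compared in the eigenbasis of `A`: there `A` becomes the diagonal matrix `diagonal lam`, a PSD
matrix `P` becomes the PSD matrix `Q = Bᵀ P B`, and `A⁺` becomes `diagonal (max lam 0)`.
Dropping the off-diagonal entries of `diagonal lam - Q` only decreases its norm, and on the
diagonal `(lam i - Q i i)² ≥ (lam i - max (lam i) 0)²` because `Q i i ≥ 0`.
-/

namespace Matrix

variable {n R : Type*} [Fintype n]

theorem sum_sq_entries_eq_trace_transpose_mul_self [CommSemiring R] (M : Matrix n n R) :
    ∑ i, ∑ j, M i j ^ 2 = trace (Mᵀ * M) := by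
  rw [Finset.sum_comm]
  simp only [trace, diag, mul_apply, transpose_apply, sq]

theorem sum_sq_entries_orthogonal_conj [DecidableEq n] [CommRing R] {B : Matrix n n R}
    (hB : B * Bᵀ = 1) (M : Matrix n n R) :
    ∑ i, ∑ j, (B * M * Bᵀ) i j ^ 2 = ∑ i, ∑ j, M i j ^ 2 := by
  have hB' : Bᵀ * B = 1 := mul_eq_one_comm.mp hB
  have hconj : (B * M * Bᵀ)ᵀ * (B * M * Bᵀ) = B * (Mᵀ * M) * Bᵀ := by
    simp only [transpose_mul, transpose_transpose, Matrix.mul_assoc]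
    rw [← Matrix.mul_assoc Bᵀ B, hB', Matrix.one_mul]
  rw [sum_sq_entries_eq_trace_transpose_mul_self, sum_sq_entries_eq_trace_transpose_mul_self,
    hconj, trace_mul_comm, ← Matrix.mul_assoc, hB', Matrix.one_mul]

theorem sum_sq_diag_le_sum_sq_entries [Ring R] [LinearOrder R] [IsOrderedRing R]
    (M : Matrix n n R) :
    ∑ i, M i i ^ 2 ≤ ∑ i, ∑ j, M i j ^ 2 :=
  Finset.sum_le_sum fun i _ =>
    Finset.single_le_sum (f := fun j => M i j ^ 2) (fun _ _ => sq_nonneg _) (Finset.mem_univ i)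

theorem sum_sq_entries_diagonal [DecidableEq n] [Semiring R] (d : n → R) :
    ∑ i, ∑ j, diagonal d i j ^ 2 = ∑ i, d i ^ 2 := by
  simp [diagonal_apply]

end Matrix

theorem sq_sub_max_zero_le_sq_sub {l q : ℝ} (hq : 0 ≤ q) : (l - max l 0) ^ 2 ≤ (l - q) ^ 2 := by
  rcases le_total l 0 with hl | hl
  · rw [max_eq_right hl]; nlinarith
  · rw [max_eq_left hl, sub_self]; simpa using sq_nonneg (l - q)

theorem frobNorm_orthogonal_conj {m : ℕ} {B : Matrix (Fin m) (Fin m) ℝ} (hB : B * Bᵀ = 1)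
    (M : Matrix (Fin m) (Fin m) ℝ) : frobNorm (B * M * Bᵀ) = frobNorm M := by
  rw [frobNorm, frobNorm, sum_sq_entries_orthogonal_conj hB]

theorem frobNorm_diagonal_sub_posPart_le {m : ℕ} (lam : Fin m → ℝ) {Q : Matrix (Fin m) (Fin m) ℝ}
    (hQ : ∀ i, 0 ≤ Q i i) :
    frobNorm (diagonal lam - diagonal fun i => max (lam i) 0) ≤ frobNorm (diagonal lam - Q) := by
  refine Real.sqrt_le_sqrt ?_
  calc ∑ i, ∑ j, (diagonal lam - diagonal fun i => max (lam i) 0) i j ^ 2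
      = ∑ i, (lam i - max (lam i) 0) ^ 2 := by rw [diagonal_sub, sum_sq_entries_diagonal]
    _ ≤ ∑ i, (diagonal lam - Q) i i ^ 2 :=
        Finset.sum_le_sum fun i _ => by simpa using sq_sub_max_zero_le_sq_sub (l := lam i) (hQ i)
    _ ≤ _ := sum_sq_diag_le_sum_sq_entries _

theorem pos_part_nearest_psd_general {m : ℕ} (A B L Aplus : Matrix (Fin m) (Fin m) ℝ)
    (hB : B * Bᵀ = 1) (lam : Fin m → ℝ)
    (hL : L = Matrix.diagonal lam) (hdecomp : A = B * L * Bᵀ)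
    (hAplus : Aplus = B * Matrix.diagonal (fun i => max (lam i) 0) * Bᵀ) :
    ∀ P : Matrix (Fin m) (Fin m) ℝ, P.PosSemidef →
      frobNorm (A - Aplus) ≤ frobNorm (A - P) := by
  intro P hP
  set Q := Bᵀ * P * B
  have hQ : Q.PosSemidef := by simpa using hP.conjTranspose_mul_mul_same B
  have hPQ : P = B * Q * Bᵀ := by
    simp only [Q, ← Matrix.mul_assoc, hB, Matrix.one_mul]
    rw [Matrix.mul_assoc, hB, Matrix.mul_one]
  rw [hAplus, hdecomp, hPQ, ← Matrix.sub_mul, ← Matrix.mul_sub, ← Matrix.sub_mul, ← Matrix.mul_sub,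
    frobNorm_orthogonal_conj hB, frobNorm_orthogonal_conj hB, hL]
  exact frobNorm_diagonal_sub_posPart_le lam fun i => hQ.diag_nonneg

/-- A⁺ is the Frobenius-nearest PSD matrix to the symmetric matrix A. -/
theorem pos_part_nearest_psd {m : ℕ} (A B L Aplus : Matrix (Fin m) (Fin m) ℝ)
    (hAsymm : A.IsSymm) (hB : B * Bᵀ = 1) (lam : Fin m → ℝ)
    (hL : L = Matrix.diagonal lam) (hdecomp : A = B * L * Bᵀ)
    (hAplus : Aplus = B * Matrix.diagonal (fun i => max (lam i) 0) * Bᵀ) :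
    ∀ P : Matrix (Fin m) (Fin m) ℝ, P.PosSemidef →
      frobNorm (A - Aplus) ≤ frobNorm (A - P) :=
  pos_part_nearest_psd_general A B L Aplus hB lam hL hdecomp hAplus
end

section
/- Let X ⊆ ℝⁿ be nonempty closed convex, f : ℝⁿ → ℝ continuous, X* = argmin_{x∈X} f(x) nonempty, and let {z_k} ⊆ X be a bounded sequence such that (i) for every x* ∈ X*, ‖z_k − x*‖ converges, and (ii) liminf_k f(z_k) ≤ f(x*) for x* ∈ X*. Then {z_k} converges to some point of X*. -/
/-!
The bounded sequence stays in a compact ball, so along the indices where `f (z k)` approaches its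
liminf it has a cluster point `w`, which lies in the closed set `X` and satisfies
`f w = liminf f (z k) ≤ min f`; hence `w ∈ X*`. Since `‖z k - w‖` converges and has `0` as a
cluster value, it tends to `0`.
-/

open Filter Topology

theorem IsCompact.exists_mapClusterPt_apply_eq_liminf {X ι : Type*} [TopologicalSpace X]
    {F : Filter ι} [F.NeBot] {K : Set X} (hK : IsCompact K) {z : ι → X} (hzK : ∀ i, z i ∈ K)
    {f : X → ℝ} (hf : Continuous f) :
    ∃ w ∈ K, MapClusterPt w F z ∧ f w = liminf (fun i => f (z i)) F := by
  obtain ⟨a, ha⟩ := hK.bddBelow_image hf.continuousOn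
  obtain ⟨b, hb⟩ := hK.bddAbove_image hf.continuousOn
  set ℓ := liminf (fun i => f (z i)) F
  have hℓ : MapClusterPt ℓ F (fun i => f (z i)) :=
    MapClusterPt.liminf (isBoundedUnder_of ⟨b, fun i => hb ⟨z i, hzK i, rfl⟩⟩).isCoboundedUnder_ge
      (isBoundedUnder_of ⟨a, fun i => ha ⟨z i, hzK i, rfl⟩⟩)
  set G := comap (fun i => f (z i)) (𝓝 ℓ) ⊓ F
  have : G.NeBot := by
    rw [← map_neBot_iff (fun i => f (z i)), Filter.push_pull']
    exact hℓ
  obtain ⟨w, hwK, hw : MapClusterPt w G z⟩ :=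
    hK (f := map z G) (tendsto_principal.2 (Eventually.of_forall hzK))
  have hfw : MapClusterPt (f w) G (fun i => f (z i)) := hw.continuousAt_comp hf.continuousAt
  have hG : Tendsto (fun i => f (z i)) G (𝓝 ℓ) := tendsto_comap.mono_left inf_le_left
  exact ⟨w, hwK, hw.mono inf_le_right, eq_of_nhds_neBot (hfw.neBot.mono (inf_le_inf_left _ hG))⟩

theorem tendsto_of_mapClusterPt_of_tendsto_dist {X ι : Type*} [PseudoMetricSpace X]
    {F : Filter ι} {z : ι → X} {w : X} {L : ℝ} (hw : MapClusterPt w F z)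
    (hL : Tendsto (fun i => dist (z i) w) F (𝓝 L)) : Tendsto z F (𝓝 w) := by
  have h0 : MapClusterPt (dist w w) F (fun i => dist (z i) w) :=
    hw.continuousAt_comp (continuous_id.dist continuous_const).continuousAt
  rw [dist_self] at h0
  have hL0 : (0 : ℝ) = L := eq_of_nhds_neBot (h0.neBot.mono (inf_le_inf_left _ hL))
  exact tendsto_iff_dist_tendsto_zero.2 (hL0 ▸ hL)

theorem quasi_fejer_convergence_general {n : ℕ} (X : Set (EuclideanSpace ℝ (Fin n)))
    (hclosed : IsClosed X)
    (f : EuclideanSpace ℝ (Fin n) → ℝ) (hf : Continuous f)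
    (Xstar : Set (EuclideanSpace ℝ (Fin n)))
    (hXstar : Xstar = {x ∈ X | ∀ y ∈ X, f x ≤ f y}) (hXsne : Xstar.Nonempty)
    (z : ℕ → EuclideanSpace ℝ (Fin n)) (hzX : ∀ k, z k ∈ X)
    (hbdd : ∃ M, ∀ k, ‖z k‖ ≤ M)
    (hfejer : ∀ xs ∈ Xstar, ∃ L, Filter.Tendsto (fun k => ‖z k - xs‖) Filter.atTop (nhds L))
    (hliminf : ∀ xs ∈ Xstar, Filter.liminf (fun k => f (z k)) Filter.atTop ≤ f xs) :
    ∃ xs ∈ Xstar, Filter.Tendsto z Filter.atTop (nhds xs) := by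
  obtain ⟨x₀, hx₀⟩ := hXsne
  obtain ⟨M, hM⟩ := hbdd
  obtain ⟨w, -, hw, hfw⟩ := (isCompact_closedBall 0 M).exists_mapClusterPt_apply_eq_liminf
    (F := atTop) (fun k => mem_closedBall_zero_iff.2 (hM k)) hf
  have hwX : w ∈ X := hclosed.mem_of_mapClusterPt hw (Eventually.of_forall hzX)
  have hwXstar : w ∈ Xstar := by
    have hmin := hliminf x₀ hx₀
    rw [hXstar] at hx₀ ⊢
    exact ⟨hwX, fun y hy => (hfw.trans_le hmin).trans (hx₀.2 y hy)⟩
  obtain ⟨L, hL⟩ := hfejer w hwXstar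
  simp only [← dist_eq_norm] at hL
  exact ⟨w, hwXstar, tendsto_of_mapClusterPt_of_tendsto_dist hw hL⟩

/-- A bounded quasi-Fejér monotone sequence with an optimal accumulation point
converges to a minimizer. -/
theorem quasi_fejer_convergence {n : ℕ} (X : Set (EuclideanSpace ℝ (Fin n)))
    (hne : X.Nonempty) (hclosed : IsClosed X) (hconv : Convex ℝ X)
    (f : EuclideanSpace ℝ (Fin n) → ℝ) (hf : Continuous f)
    (Xstar : Set (EuclideanSpace ℝ (Fin n)))
    (hXstar : Xstar = {x ∈ X | ∀ y ∈ X, f x ≤ f y}) (hXsne : Xstar.Nonempty)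
    (z : ℕ → EuclideanSpace ℝ (Fin n)) (hzX : ∀ k, z k ∈ X)
    (hbdd : ∃ M, ∀ k, ‖z k‖ ≤ M)
    (hfejer : ∀ xs ∈ Xstar, ∃ L, Filter.Tendsto (fun k => ‖z k - xs‖) Filter.atTop (nhds L))
    (hliminf : ∀ xs ∈ Xstar, Filter.liminf (fun k => f (z k)) Filter.atTop ≤ f xs) :
    ∃ xs ∈ Xstar, Filter.Tendsto z Filter.atTop (nhds xs) :=
  quasi_fejer_convergence_general X hclosed f hf Xstar hXstar hXsne z hzX hbdd hfejer hliminf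
end
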